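/- The canonical assignment induced by a hash function h with age-rule priorities (Robin Hood hashing) is linear: for every state q (a set of at most m−1 keys) and key v ∉ q, every element of q moves down (forward cyclically) by at most one cell in can(q ∪ {v}) compared to its position in can(q). Equivalently, upon deleting an element, every remaining element moves up by at most one cell. -/

import Mathlib

/-- The rank of `v` at cell `i`: the cyclic distance `(i - h v) mod m`. -/
def rnk {U : Type*} {m : ℕ} (h : U → Fin m) (v : U) (i : Fin m) : ℕ :=
  ((i : ℕ) + m - (h v : ℕ)) % m

/-- Cyclic distance from `a` to `b`, going forward, modulo `m`. -/
def cdist {m : ℕ} (a b : Fin m) : ℕ :=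
  ((b : ℕ) + m - (a : ℕ)) % m

/-- Robin Hood priority: `a >_i b` iff `rank(a,i) > rank(b,i)`, or equal ranks and `a > b`. -/
def prioGT {U : Type*} [LinearOrder U] {m : ℕ} (h : U → Fin m) (i : Fin m) (a b : U) : Prop :=
  rnk h a i > rnk h b i ∨ (rnk h a i = rnk h b i ∧ a > b)

/-- Priority extended to `Option U`: `none` is strictly below every `some v`. -/
def oGT {U : Type*} [LinearOrder U] {m : ℕ} (h : U → Fin m) (i : Fin m) :
    Option U → Option U → Prop
  | some a, some b => prioGT h i a b
  | some _, none => True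
  | none, _ => False

/-- `x ≥_i y` : strictly higher priority, or equal. -/
def oGE {U : Type*} [LinearOrder U] {m : ℕ} (h : U → Fin m) (i : Fin m)
    (x y : Option U) : Prop :=
  oGT h i x y ∨ x = y

/-- The Robin Hood ordering invariant: if `v` is stored at cell `i`, then every cell `j`
on the cyclic interval from `h v` to `i` (exclusive of `i`) stores a value of priority
at least that of `v` at cell `j`. -/
def OrdInv {U : Type*} [LinearOrder U] {m : ℕ} (h : U → Fin m) (A : Fin m → Option U) : Prop :=
  ∀ i v, A i = some v → ∀ j, cdist (h v) j < cdist (h v) i → oGE h j (A j) (some v)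

/-- The multiset of elements stored in the table `A` (counted with multiplicity). -/
def elemsOf {U : Type*} {m : ℕ} (A : Fin m → Option U) : Multiset U :=
  ((List.ofFn A).filterMap id : List U)

/-!
Measured from a cell `e` that is empty in both tables, the age-rule priority at a cell becomes a
single linear order on keys: smaller hash offset `cdist e (h u)` first, ties broken by the larger
key. The ordering invariant then says that a table stores its keys from `e` onwards in this
order, each one either at its hash cell or directly after its predecessor. Comparing the tables
of `q` and `q ∪ {v}` by induction along this order, the keys above `v` keep their cells and every
key below `v` moves forward by at most one cell.

An empty cell of the table for `q ∪ {v}` is also empty in the table for `q`: if a cell `e` is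
empty, then for every cell `a ≠ e` fewer than `cdist a e` keys hash into the cyclic interval
`(a, e]`, a condition inherited by subsets, whereas if `e` is occupied it fails for the nearest
empty cell `a` before `e`.
-/

open Finset

section CyclicDistance

variable {m : ℕ}

lemma cdist_eq_ite (a b : Fin m) :
    cdist a b = if (a : ℕ) ≤ b then (b : ℕ) - a else (b : ℕ) + m - a := by
  have := a.isLt
  have := b.isLt
  unfold cdist
  split_ifs
  · rw [show (b : ℕ) + m - a = b - a + m by omega, Nat.add_mod_right, Nat.mod_eq_of_lt (by omega)]
  · exact Nat.mod_eq_of_lt (by omega)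

lemma cdist_lt (a b : Fin m) : cdist a b < m := by
  have := a.isLt
  have := b.isLt
  rw [cdist_eq_ite]
  split_ifs <;> omega

lemma cdist_pos {a b : Fin m} (hab : a ≠ b) : 0 < cdist a b := by
  have := Fin.val_ne_of_ne hab
  rw [cdist_eq_ite]
  split_ifs <;> omega

lemma cdist_left_injective (a : Fin m) : Function.Injective (cdist a) := by
  intro b c hbc
  have := a.isLt
  have := b.isLt
  have := c.isLt
  simp only [cdist_eq_ite] at hbc
  apply Fin.ext
  split_ifs at hbc <;> omega

lemma cdist_eq_sub_of_le {e a b : Fin m} (hab : cdist e a ≤ cdist e b) :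
    cdist a b = cdist e b - cdist e a := by
  have := e.isLt
  have := a.isLt
  have := b.isLt
  simp only [cdist_eq_ite] at *
  split_ifs at * <;> omega

lemma cdist_add_cdist_of_lt {a b c : Fin m} (habc : cdist a b + cdist b c < m) :
    cdist a b + cdist b c = cdist a c := by
  have := a.isLt
  have := b.isLt
  have := c.isLt
  simp only [cdist_eq_ite] at *
  split_ifs at * <;> omega

lemma cdist_pos_and_le_of_lt {x p e : Fin m} (hxp : cdist x p < cdist x e) :
    0 < cdist e x ∧ cdist e x ≤ cdist e p := by
  have := x.isLt
  have := p.isLt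
  have := e.isLt
  simp only [cdist_eq_ite] at *
  split_ifs at * <;> omega

lemma exists_cdist_eq (e : Fin m) {t : ℕ} (ht : t < m) : ∃ k, cdist e k = t := by
  have := e.isLt
  rcases Nat.lt_or_ge (e + t) m with hlt | hge
  · refine ⟨⟨e + t, hlt⟩, ?_⟩
    simp only [cdist_eq_ite]
    split_ifs <;> omega
  · refine ⟨⟨e + t - m, by omega⟩, ?_⟩
    simp only [cdist_eq_ite]
    split_ifs <;> omega

lemma card_filter_cdist_mem (a : Fin m) {S : Finset ℕ} (hS : ∀ n ∈ S, n < m) :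
    #(univ.filter fun p => cdist a p ∈ S) = #S :=
  card_nbij (cdist a) (fun p hp => (mem_filter.1 hp).2) (cdist_left_injective a).injOn
    fun n hn => by
      obtain ⟨k, hk⟩ := exists_cdist_eq a (hS n hn)
      exact ⟨k, by simpa [hk] using hn, hk⟩

end CyclicDistance

section Storage

variable {U : Type*} {m : ℕ} {T : Fin m → Option U} {s : Finset U}

lemma Multiset.count_filterMap {α β : Type*} [DecidableEq β] (f : α → Option β)
    (t : Multiset α) (b : β) : (t.filterMap f).count b = (t.filter (f · = some b)).card := by
  induction t using Multiset.induction_on with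
  | empty => simp
  | cons a t ih =>
    cases hfa : f a with
    | none => simp [Multiset.filterMap_cons_none _ _ hfa, hfa, ih]
    | some c =>
      rw [Multiset.filterMap_cons_some _ _ _ hfa, Multiset.count_cons, Multiset.filter_cons, ih]
      by_cases hcb : c = b <;> simp [hfa, hcb, Ne.symm, add_comm]

lemma elemsOf_eq_filterMap (T : Fin m → Option U) : elemsOf T = univ.val.filterMap T := by
  rw [elemsOf, ← Multiset.filterMap_coe, ← Fin.univ_val_map, Multiset.filterMap_map]
  rfl

lemma exists_store_iff_mem (hSt : elemsOf T = s.val) {u : U} : (∃ p, T p = some u) ↔ u ∈ s := by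
  rw [← mem_val, ← hSt, elemsOf_eq_filterMap]
  simp [Multiset.mem_filterMap]

lemma cell_eq_of_store (hSt : elemsOf T = s.val) {u : U} {i j : Fin m} (hi : T i = some u)
    (hj : T j = some u) : i = j := by
  classical
  have hcount := Multiset.nodup_iff_count_le_one.1 (hSt ▸ s.nodup) u
  rw [elemsOf_eq_filterMap, Multiset.count_filterMap, ← filter_val] at hcount
  exact card_le_one.1 hcount i (by simp [hi]) j (by simp [hj])

lemma card_le_card_of_forall_stored {s' : Finset U} {C : Finset (Fin m)}
    (hC : ∀ u ∈ s', ∃ p ∈ C, T p = some u) : #s' ≤ #C := by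
  classical
  calc #s' = #(s'.image some) := (card_image_of_injective _ (Option.some_injective U)).symm
    _ ≤ #C := card_le_card_of_surjOn T fun x hx => by
        obtain ⟨u, hu, rfl⟩ := mem_image.1 hx
        obtain ⟨p, hp, hTp⟩ := hC u hu
        exact ⟨p, hp, hTp⟩

lemma card_le_card_of_forall_occupied (hSt : elemsOf T = s.val) {s' : Finset U}
    {C : Finset (Fin m)} (hC : ∀ p ∈ C, ∃ u ∈ s', T p = some u) : #C ≤ #s' := by
  classical
  calc #C ≤ #(s'.image some) := card_le_card_of_injOn T
        (fun p hp => by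
          obtain ⟨u, hu, hTp⟩ := hC p hp
          exact mem_image.2 ⟨u, hu, hTp.symm⟩)
        (fun p hp p' _ hpp' => by
          obtain ⟨u, -, hTp⟩ := hC p hp
          exact cell_eq_of_store hSt hTp (hpp' ▸ hTp))
    _ = #s' := card_image_of_injective _ (Option.some_injective U)

lemma exists_eq_none (hSt : elemsOf T = s.val) (hs : #s < m) : ∃ e, T e = none := by
  by_contra! hall
  have := card_le_card_of_forall_occupied hSt (C := univ) (s' := s) fun p _ => by
    obtain ⟨u, hu⟩ := Option.ne_none_iff_exists'.1 (hall p)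
    exact ⟨u, (exists_store_iff_mem hSt).1 ⟨p, hu⟩, hu⟩
  simp only [card_univ, Fintype.card_fin] at this
  omega

end Storage

section RobinHood

variable {U : Type*} [LinearOrder U] {m : ℕ} {h : U → Fin m} {T : Fin m → Option U}
  {s : Finset U}

structure IsRobinHoodTable (h : U → Fin m) (T : Fin m → Option U) (s : Finset U) : Prop where
  ordInv : OrdInv h T
  elemsOf_eq : elemsOf T = s.val

lemma oGE_some_some {j : Fin m} {a b : U} :
    oGE h j (some a) (some b) ↔ prioGT h j a b ∨ a = b := by
  simp [oGE, oGT]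

lemma not_oGE_none_some {j : Fin m} {b : U} : ¬ oGE h j none (some b) := by
  simp [oGE, oGT]

lemma cdist_hash_lt_of_eq_none (hInv : OrdInv h T) {e p : Fin m} {u : U} (he : T e = none)
    (hp : T p = some u) : cdist (h u) p < cdist (h u) e := by
  by_contra! hle
  have hpe : p ≠ e := by
    rintro rfl
    simp_all
  have hlt := lt_of_le_of_ne hle fun heq => hpe (cdist_left_injective _ heq).symm
  have := hInv p u hp e hlt
  rw [he] at this
  exact not_oGE_none_some this

/-- The age-rule priority seen from an empty cell `e`, as one linear order that does not depend
on the cell: smaller keys have higher priority. -/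
def priorityKey (h : U → Fin m) (e : Fin m) (u : U) : ℕ ×ₗ Uᵒᵈ :=
  toLex (cdist e (h u), OrderDual.toDual u)

lemma cdist_hash_le_of_priorityKey_lt {e : Fin m} {a b : U}
    (hab : priorityKey h e a < priorityKey h e b) : cdist e (h a) ≤ cdist e (h b) := by
  rcases Prod.Lex.toLex_lt_toLex.1 hab with hlt | ⟨heq, -⟩
  · exact hlt.le
  · exact heq.le

lemma prioGT_iff_priorityKey_lt {e j : Fin m} {a b : U} (ha : cdist e (h a) ≤ cdist e j)
    (hb : cdist e (h b) ≤ cdist e j) :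
    prioGT h j a b ↔ priorityKey h e a < priorityKey h e b := by
  have hra : rnk h a j = cdist e j - cdist e (h a) := cdist_eq_sub_of_le ha
  have hrb : rnk h b j = cdist e j - cdist e (h b) := cdist_eq_sub_of_le hb
  rw [prioGT, hra, hrb, priorityKey, priorityKey, Prod.Lex.toLex_lt_toLex]
  exact or_congr (by omega) (and_congr (by omega) OrderDual.toDual_lt_toDual.symm)

lemma cdist_hash_le_of_store (hInv : OrdInv h T) {e p : Fin m} {u : U} (he : T e = none)
    (hp : T p = some u) : cdist e (h u) ≤ cdist e p :=
  (cdist_pos_and_le_of_lt (cdist_hash_lt_of_eq_none hInv he hp)).2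

lemma cdist_lt_of_priorityKey_lt (hInv : OrdInv h T) {e p p' : Fin m} {a b : U}
    (he : T e = none) (ha : T p = some a) (hb : T p' = some b)
    (hab : priorityKey h e a < priorityKey h e b) : cdist e p < cdist e p' := by
  by_contra! hle
  have hpp : p' ≠ p := by
    rintro rfl
    simp_all
  have hlt := lt_of_le_of_ne hle fun heq => hpp (cdist_left_injective e heq)
  have hda := cdist_hash_le_of_priorityKey_lt hab
  have hdb := cdist_hash_le_of_store hInv he hb
  have hOrd := hInv p a ha p' (by
    rw [cdist_eq_sub_of_le (hda.trans hdb), cdist_eq_sub_of_le (hda.trans (hdb.trans hle))]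
    omega)
  rw [hb, oGE_some_some] at hOrd
  rcases hOrd with hgt | rfl
  · exact lt_asymm hab ((prioGT_iff_priorityKey_lt hdb (hda.trans hdb)).1 hgt)
  · exact lt_irrefl _ hab

lemma exists_store_pred (hT : IsRobinHoodTable h T s) {e p : Fin m} {u : U} (he : T e = none)
    (hp : T p = some u) (hlt : cdist e (h u) < cdist e p) :
    ∃ p₀ w, T p₀ = some w ∧ cdist e p₀ + 1 = cdist e p ∧
      priorityKey h e w < priorityKey h e u := by
  obtain ⟨p₀, hp₀⟩ := exists_cdist_eq e (t := cdist e p - 1) (by have := cdist_lt e p; omega)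
  have hu₀ : cdist e (h u) ≤ cdist e p₀ := by omega
  have hOrd := hT.ordInv p u hp p₀ (by
    rw [cdist_eq_sub_of_le hu₀, cdist_eq_sub_of_le hlt.le]
    omega)
  cases hw : T p₀ with
  | none =>
    rw [hw] at hOrd
    exact absurd hOrd not_oGE_none_some
  | some w =>
    rw [hw, oGE_some_some] at hOrd
    rcases hOrd with hgt | rfl
    · exact ⟨p₀, w, hw, by omega,
        (prioGT_iff_priorityKey_lt (cdist_hash_le_of_store hT.ordInv he hw) hu₀).1 hgt⟩
    · have := cell_eq_of_store hT.elemsOf_eq hw hp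
      subst this
      omega

end RobinHood

section EmptyCells

variable {U : Type*} [LinearOrder U] {m : ℕ} {h : U → Fin m} {T A B : Fin m → Option U}
  {s q : Finset U}

def hashedIoc (h : U → Fin m) (s : Finset U) (a e : Fin m) : Finset U :=
  s.filter fun u => cdist a (h u) ∈ Ioc 0 (cdist a e)

lemma card_hashedIoc_lt (hInv : OrdInv h T) (hSt : elemsOf T = s.val) {a e : Fin m}
    (he : T e = none) (hae : a ≠ e) : #(hashedIoc h s a e) < cdist a e := by
  have hpos := cdist_pos hae
  have := cdist_lt a e
  calc #(hashedIoc h s a e) ≤ #(univ.filter fun p => cdist a p ∈ Ioo 0 (cdist a e)) := by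
        refine card_le_card_of_forall_stored (T := T) fun u hu => ?_
        obtain ⟨hus, hx⟩ := mem_filter.1 hu
        rw [mem_Ioc] at hx
        obtain ⟨p, hp⟩ := (exists_store_iff_mem hSt).2 hus
        -- `u` hashes into `(a, e]` and is stored before its probe reaches the empty cell `e`
        have hpe := cdist_hash_lt_of_eq_none hInv he hp
        have hxe := cdist_eq_sub_of_le hx.2
        have hxp := cdist_add_cdist_of_lt (a := a) (b := h u) (c := p) (by omega)
        exact ⟨p, by simp only [mem_filter, mem_univ, mem_Ioo, true_and]; omega, hp⟩
    _ = cdist a e - 1 := by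
        rw [card_filter_cdist_mem a fun n hn => (mem_Ioo.1 hn).2.trans (cdist_lt a e),
          Nat.card_Ioo, Nat.sub_zero]
    _ < cdist a e := by omega

/-- The cells between the nearest empty cell `a` before `e` and `e` are all occupied, and their
keys hash into `(a, e]`. -/
lemma exists_le_card_hashedIoc (hT : IsRobinHoodTable h T s) {e : Fin m} (he : T e ≠ none)
    (hnone : ∃ c, T c = none) : ∃ a, a ≠ e ∧ cdist a e ≤ #(hashedIoc h s a e) := by
  classical
  obtain ⟨c, hc⟩ := hnone
  obtain ⟨a, ha, hmin⟩ := exists_min_image (univ.filter fun c => T c = none) (cdist · e)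
    ⟨c, by simp [hc]⟩
  have ha : T a = none := (mem_filter.1 ha).2
  refine ⟨a, fun hae => he (hae ▸ ha), ?_⟩
  calc cdist a e = #(univ.filter fun p => cdist a p ∈ Ioc 0 (cdist a e)) := by
        rw [card_filter_cdist_mem a fun n hn => (mem_Ioc.1 hn).2.trans_lt (cdist_lt a e),
          Nat.card_Ioc, Nat.sub_zero]
    _ ≤ #(hashedIoc h s a e) := by
        refine card_le_card_of_forall_occupied hT.elemsOf_eq fun p hp => ?_
        have hpa : 0 < cdist a p ∧ cdist a p ≤ cdist a e := by simpa using hp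
        cases hTp : T p with
        | none =>
          have := hmin p (by simp [hTp])
          have := cdist_eq_sub_of_le hpa.2
          omega
        | some u =>
          have hx := cdist_pos_and_le_of_lt (cdist_hash_lt_of_eq_none hT.ordInv ha hTp)
          exact ⟨u, mem_filter.2 ⟨(exists_store_iff_mem hT.elemsOf_eq).1 ⟨p, hTp⟩,
            mem_Ioc.2 ⟨hx.1, hx.2.trans hpa.2⟩⟩, rfl⟩

lemma eq_none_of_subset (hA : IsRobinHoodTable h A q) (hB : IsRobinHoodTable h B s)
    (hqs : q ⊆ s) (hq : #q < m) {e : Fin m} (heB : B e = none) : A e = none := by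
  by_contra heA
  obtain ⟨a, hae, hle⟩ := exists_le_card_hashedIoc hA heA (exists_eq_none hA.elemsOf_eq hq)
  have hsub : hashedIoc h q a e ⊆ hashedIoc h s a e := filter_subset_filter _ hqs
  have := card_le_card hsub
  have := card_hashedIoc_lt hB.ordInv hB.elemsOf_eq heB hae
  omega

end EmptyCells

section Insertion

variable {U : Type*} [LinearOrder U] {m : ℕ} {h : U → Fin m} {A B : Fin m → Option U}
  {q s : Finset U} {v : U} {e : Fin m}

lemma cdist_le_of_subset (hA : IsRobinHoodTable h A q) (hB : IsRobinHoodTable h B s)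
    (hqs : q ⊆ s) (heA : A e = none) (heB : B e = none) {u : U} {p p' : Fin m}
    (hp : A p = some u) (hp' : B p' = some u) : cdist e p ≤ cdist e p' := by
  obtain ⟨n, hn⟩ : ∃ n, cdist e p = n := ⟨_, rfl⟩
  induction n using Nat.strong_induction_on generalizing u p p' with
  | _ n ih =>
  rcases (cdist_hash_le_of_store hA.ordInv heA hp).eq_or_lt with hd | hd
  · exact hd ▸ cdist_hash_le_of_store hB.ordInv heB hp'
  · obtain ⟨p₀, w, hw, hp₀, hwu⟩ := exists_store_pred hA heA hp hd
    obtain ⟨p₁, hw₁⟩ := (exists_store_iff_mem hB.elemsOf_eq).2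
      (hqs ((exists_store_iff_mem hA.elemsOf_eq).1 ⟨p₀, hw⟩))
    have := ih _ (by omega) hw hw₁ rfl
    have := cdist_lt_of_priorityKey_lt hB.ordInv heB hw₁ hp' hwu
    omega

variable [DecidableEq U]

lemma mem_of_store_insert_of_priorityKey_lt (hB : IsRobinHoodTable h B (insert v q)) {w : U}
    {p : Fin m} (hp : B p = some w) (hwv : priorityKey h e w < priorityKey h e v) : w ∈ q :=
  mem_of_mem_insert_of_ne ((exists_store_iff_mem hB.elemsOf_eq).1 ⟨p, hp⟩)
    fun hwv' => hwv.ne (hwv' ▸ rfl)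

lemma cdist_le_of_priorityKey_lt_insert (hA : IsRobinHoodTable h A q)
    (hB : IsRobinHoodTable h B (insert v q)) (heA : A e = none) (heB : B e = none) {u : U}
    {p p' : Fin m} (hp : A p = some u) (hp' : B p' = some u)
    (huv : priorityKey h e u < priorityKey h e v) : cdist e p' ≤ cdist e p := by
  obtain ⟨n, hn⟩ : ∃ n, cdist e p' = n := ⟨_, rfl⟩
  induction n using Nat.strong_induction_on generalizing u p p' with
  | _ n ih =>
  rcases (cdist_hash_le_of_store hB.ordInv heB hp').eq_or_lt with hd | hd
  · exact hd ▸ cdist_hash_le_of_store hA.ordInv heA hp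
  · obtain ⟨p₀, w, hw, hp₀, hwu⟩ := exists_store_pred hB heB hp' hd
    obtain ⟨p₁, hw₁⟩ := (exists_store_iff_mem hA.elemsOf_eq).2
      (mem_of_store_insert_of_priorityKey_lt hB hw (hwu.trans huv))
    have := ih _ (by omega) hw₁ hw (hwu.trans huv) rfl
    have := cdist_lt_of_priorityKey_lt hA.ordInv heA hw₁ hp hwu
    omega

lemma cdist_store_le_of_priorityKey_lt (hA : IsRobinHoodTable h A q)
    (hB : IsRobinHoodTable h B (insert v q)) (heA : A e = none) (heB : B e = none) {u : U}
    {p pv : Fin m} (hp : A p = some u) (hpv : B pv = some v)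
    (hvu : priorityKey h e v < priorityKey h e u) : cdist e pv ≤ cdist e p := by
  rcases (cdist_hash_le_of_store hB.ordInv heB hpv).eq_or_lt with hd | hd
  · exact hd ▸ (cdist_hash_le_of_priorityKey_lt hvu).trans (cdist_hash_le_of_store hA.ordInv heA hp)
  · obtain ⟨p₀, w, hw, hp₀, hwv⟩ := exists_store_pred hB heB hpv hd
    obtain ⟨p₁, hw₁⟩ := (exists_store_iff_mem hA.elemsOf_eq).2
      (mem_of_store_insert_of_priorityKey_lt hB hw hwv)
    have := cdist_le_of_priorityKey_lt_insert hA hB heA heB hw₁ hw hwv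
    have := cdist_lt_of_priorityKey_lt hA.ordInv heA hw₁ hp (hwv.trans hvu)
    omega

lemma cdist_le_succ_of_insert (hA : IsRobinHoodTable h A q)
    (hB : IsRobinHoodTable h B (insert v q)) (heA : A e = none) (heB : B e = none) {u : U}
    {p p' : Fin m} (hp : A p = some u) (hp' : B p' = some u) : cdist e p' ≤ cdist e p + 1 := by
  obtain ⟨n, hn⟩ : ∃ n, cdist e p' = n := ⟨_, rfl⟩
  induction n using Nat.strong_induction_on generalizing u p p' with
  | _ n ih =>
  rcases (cdist_hash_le_of_store hB.ordInv heB hp').eq_or_lt with hd | hd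
  · have := cdist_hash_le_of_store hA.ordInv heA hp
    omega
  · obtain ⟨p₀, w, hw, hp₀, hwu⟩ := exists_store_pred hB heB hp' hd
    rcases mem_insert.1 ((exists_store_iff_mem hB.elemsOf_eq).1 ⟨p₀, hw⟩) with rfl | hwq
    · have := cdist_store_le_of_priorityKey_lt hA hB heA heB hp hw hwu
      omega
    · obtain ⟨p₁, hw₁⟩ := (exists_store_iff_mem hA.elemsOf_eq).2 hwq
      have := ih _ (by omega) hw₁ hw rfl
      have := cdist_lt_of_priorityKey_lt hA.ordInv heA hw₁ hp hwu
      omega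

end Insertion

theorem stmt18_general {U : Type*} [LinearOrder U] [DecidableEq U] {m : ℕ}
    (h : U → Fin m)
    -- the canonical assignment induced by h and age-rule (Robin Hood) priorities
    (can : Finset U → Fin m → Option U)
    (hcanInv : ∀ q : Finset U, q.card + 1 ≤ m → OrdInv h (can q))
    (hcanStore : ∀ q : Finset U, q.card + 1 ≤ m → elemsOf (can q) = q.val)
    (q : Finset U) (v : U) (hq : q.card + 2 ≤ m) :
    -- every element of q moves forward (cyclically) by at most one cell
    -- in can(q ∪ {v}) compared to can(q)
    ∀ v' ∈ q, ∀ i j : Fin m,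
      can q i = some v' → can (insert v q) j = some v' → cdist i j ≤ 1 := by
  intro v' _ i j hi hj
  have hins : (insert v q).card + 1 ≤ m := by
    have := card_insert_le v q
    omega
  have hA : IsRobinHoodTable h (can q) q := ⟨hcanInv q (by omega), hcanStore q (by omega)⟩
  have hB : IsRobinHoodTable h (can (insert v q)) (insert v q) :=
    ⟨hcanInv _ hins, hcanStore _ hins⟩
  obtain ⟨e, heB⟩ := exists_eq_none hB.elemsOf_eq (by omega)
  have heA := eq_none_of_subset hA hB (subset_insert v q) (by omega) heB
  have hle := cdist_le_of_subset hA hB (subset_insert v q) heA heB hi hj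
  have hle' := cdist_le_succ_of_insert hA hB heA heB hi hj
  rw [cdist_eq_sub_of_le hle]
  omega

theorem stmt18 {U : Type*} [LinearOrder U] [DecidableEq U] {m : ℕ} [NeZero m]
    (h : U → Fin m)
    -- the canonical assignment induced by h and age-rule (Robin Hood) priorities
    (can : Finset U → Fin m → Option U)
    (hcanInv : ∀ q : Finset U, q.card + 1 ≤ m → OrdInv h (can q))
    (hcanStore : ∀ q : Finset U, q.card + 1 ≤ m → elemsOf (can q) = q.val)
    (q : Finset U) (v : U) (hv : v ∉ q) (hq : q.card + 2 ≤ m) :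
    -- every element of q moves forward (cyclically) by at most one cell
    -- in can(q ∪ {v}) compared to can(q)
    ∀ v' ∈ q, ∀ i j : Fin m,
      can q i = some v' → can (insert v q) j = some v' → cdist i j ≤ 1 :=
  stmt18_general h can hcanInv hcanStore q v hq
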